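/- arXiv:2409.00818 — 4 statements merged into one kernel-verified Lean document; each statement's English description precedes it below -/
import Mathlib

section
/- For the nonlinear reaction term c(u) = u(1 − u^δ)(u^δ − γ) with δ ∈ ℕ, δ ≥ 1, and real numbers U, V (pointwise version): −(U^(2δ+1) − V^(2δ+1))(U − V) ≤ −(1/2) U^(2δ)(U − V)² − (1/2) V^(2δ)(U − V)². Equivalently, (U^(2δ+1) − V^(2δ+1))(U − V) ≥ (1/2)(U^(2δ) + V^(2δ))(U − V)² for all real U, V. -/
lemma aux_mono (n : ℕ) (a b : ℝ) (ha : 0 ≤ a) (hb : 0 ≤ b) :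
    0 ≤ (a - b) * (a ^ n - b ^ n) := by
  rcases le_total a b with h | h
  · have := pow_le_pow_left₀ ha h n
    nlinarith
  · exact mul_nonneg (sub_nonneg.2 h) (sub_nonneg.2 (pow_le_pow_left₀ hb h n))

/-- Pointwise monotonicity estimate for the odd power nonlinearity:
`−(U^(2δ+1) − V^(2δ+1))(U − V) ≤ −(1/2)U^(2δ)(U−V)² − (1/2)V^(2δ)(U−V)²`,
equivalently `(U^(2δ+1) − V^(2δ+1))(U − V) ≥ (1/2)(U^(2δ) + V^(2δ))(U−V)²`. -/
theorem odd_power_monotone (δ : ℕ) (hδ : 1 ≤ δ) (U V : ℝ) :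
    (-((U ^ (2 * δ + 1) - V ^ (2 * δ + 1)) * (U - V)) ≤
      -(1 / 2) * U ^ (2 * δ) * (U - V) ^ 2 - (1 / 2) * V ^ (2 * δ) * (U - V) ^ 2) ∧
    ((U ^ (2 * δ + 1) - V ^ (2 * δ + 1)) * (U - V) ≥
      (1 / 2) * (U ^ (2 * δ) + V ^ (2 * δ)) * (U - V) ^ 2) := by
  have hU1 : U ^ (2 * δ + 1) = (U ^ 2) ^ δ * U := by rw [pow_succ, pow_mul]
  have hV1 : V ^ (2 * δ + 1) = (V ^ 2) ^ δ * V := by rw [pow_succ, pow_mul]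
  have hU2 : U ^ (2 * δ) = (U ^ 2) ^ δ := by rw [pow_mul]
  have hV2 : V ^ (2 * δ) = (V ^ 2) ^ δ := by rw [pow_mul]
  have key := aux_mono δ (U ^ 2) (V ^ 2) (sq_nonneg U) (sq_nonneg V)
  constructor <;> rw [hU1, hV1, hU2, hV2] <;> nlinarith [key]
end

section
/- Let U, V be real numbers, δ ≥ 1 a natural number, γ ∈ (0,1), β > 0. Then the difference of reaction terms satisfies β[c(U) − c(V)](U−V) ≤ −βγ(U−V)² − (β/4)U^(2δ)(U−V)² − (β/4)V^(2δ)(U−V)² + (β/2)·2^(2δ)(1+γ)²(δ+1)²(U−V)², where c(u) = u(1−u^δ)(u^δ−γ). -/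
/-- Auxiliary nonnegative polynomial for the odd-power monotonicity identity. -/
def huxT : ℕ → ℝ → ℝ → ℝ
  | 0, _, _ => 0
  | n + 1, a, b => a ^ 2 * huxT n a b + b ^ (2 * n)

lemma huxT_nonneg (n : ℕ) (a b : ℝ) : 0 ≤ huxT n a b := by
  induction n with
  | zero => simp [huxT]
  | succ n ih =>
    simp only [huxT]
    have hb : (0:ℝ) ≤ b ^ (2 * n) := by rw [pow_mul]; positivity
    nlinarith [mul_nonneg (sq_nonneg a) ih]

lemma hux_identity (n : ℕ) (a b : ℝ) :
    2 * (a ^ (2 * n + 1) - b ^ (2 * n + 1)) * (a - b) -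
      (a ^ (2 * n) + b ^ (2 * n)) * (a - b) ^ 2 =
    (a + b) ^ 2 * (a - b) ^ 2 * huxT n a b := by
  induction n with
  | zero => simp [huxT]; ring
  | succ n ih =>
    have h : 2 * (n + 1) + 1 = (2 * n + 1) + 2 := by ring
    have h2 : 2 * (n + 1) = 2 * n + 2 := by ring
    rw [h, h2]
    simp only [huxT, pow_add]
    linear_combination a ^ 2 * ih

lemma hux_odd_mono (n : ℕ) (a b : ℝ) :
    (a ^ (2 * n) + b ^ (2 * n)) * (a - b) ^ 2 / 2 ≤
      (a ^ (2 * n + 1) - b ^ (2 * n + 1)) * (a - b) := by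
  have := hux_identity n a b
  nlinarith [mul_nonneg (mul_nonneg (sq_nonneg (a + b)) (sq_nonneg (a - b))) (huxT_nonneg n a b)]

/-- Lipschitz bound for the (n+1)-power. -/
lemma hux_pow_lip (n : ℕ) (a b : ℝ) :
    |a ^ (n + 1) - b ^ (n + 1)| ≤ ((n : ℝ) + 1) * (|a| ^ n + |b| ^ n) * |a - b| := by
  have hgeom := geom_sum₂_mul a b (n + 1)
  rw [← hgeom, abs_mul]
  gcongr
  calc |∑ i ∈ Finset.range (n + 1), a ^ i * b ^ (n + 1 - 1 - i)|
      ≤ ∑ i ∈ Finset.range (n + 1), |a ^ i * b ^ (n + 1 - 1 - i)| :=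
        Finset.abs_sum_le_sum_abs _ _
    _ ≤ ∑ _i ∈ Finset.range (n + 1), (|a| ^ n + |b| ^ n) := by
        apply Finset.sum_le_sum
        intro i hi
        rw [Finset.mem_range] at hi
        rw [abs_mul, abs_pow, abs_pow]
        rcases le_total |a| |b| with hab | hab
        · calc |a| ^ i * |b| ^ (n + 1 - 1 - i) ≤ |b| ^ i * |b| ^ (n + 1 - 1 - i) := by
                gcongr
          _ = |b| ^ n := by
                have hni : i + (n + 1 - 1 - i) = n := by omega
                rw [← pow_add, hni]
          _ ≤ |a| ^ n + |b| ^ n := le_add_of_nonneg_left (by positivity)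
        · calc |a| ^ i * |b| ^ (n + 1 - 1 - i) ≤ |a| ^ i * |a| ^ (n + 1 - 1 - i) := by
                gcongr
          _ = |a| ^ n := by
                have hni : i + (n + 1 - 1 - i) = n := by omega
                rw [← pow_add, hni]
          _ ≤ |a| ^ n + |b| ^ n := le_add_of_nonneg_right (by positivity)
    _ = ((n : ℝ) + 1) * (|a| ^ n + |b| ^ n) := by
        rw [Finset.sum_const, Finset.card_range]; ring


/-- Pointwise one-sided Lipschitz estimate for the generalized Huxley nonlinearity
`c(u) = u(1−u^δ)(u^δ−γ)`:
`β(c(U) − c(V))(U−V) ≤ −βγ(U−V)² − (β/4)U^(2δ)(U−V)² − (β/4)V^(2δ)(U−V)²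
  + (β/2) 2^(2δ) (1+γ)² (δ+1)² (U−V)²`. -/
theorem huxley_reaction_estimate (δ : ℕ) (hδ : 1 ≤ δ) (γ β U V : ℝ)
    (hγ : γ ∈ Set.Ioo (0 : ℝ) 1) (hβ : 0 < β) :
    β * (U * (1 - U ^ δ) * (U ^ δ - γ) - V * (1 - V ^ δ) * (V ^ δ - γ)) * (U - V) ≤
      -(β * γ) * (U - V) ^ 2 - β / 4 * U ^ (2 * δ) * (U - V) ^ 2 -
        β / 4 * V ^ (2 * δ) * (U - V) ^ 2 +
        β / 2 * 2 ^ (2 * δ) * (1 + γ) ^ 2 * ((δ : ℝ) + 1) ^ 2 * (U - V) ^ 2 := by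
  obtain ⟨hγ0, hγ1⟩ := hγ
  have hexp : U * (1 - U ^ δ) * (U ^ δ - γ) - V * (1 - V ^ δ) * (V ^ δ - γ)
      = -γ  * (U - V) + (1 + γ) * (U ^ (δ + 1) - V ^ (δ + 1))
        - (U ^ (2 * δ + 1) - V ^ (2 * δ + 1)) := by
    have hU : U ^ (2 * δ + 1) = U ^ δ * U ^ δ * U := by
      rw [two_mul, pow_add, pow_add, pow_one]
    have hV : V ^ (2 * δ + 1) = V ^ δ * V ^ δ * V := by
      rw [two_mul, pow_add, pow_add, pow_one]
    have hU1 : U ^ (δ + 1) = U ^ δ * U := by rw [pow_succ]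
    have hV1 : V ^ (δ + 1) = V ^ δ * V := by rw [pow_succ]
    rw [hU, hV, hU1, hV1]; ring
  have h1 : (U ^ (2 * δ) + V ^ (2 * δ)) * (U - V) ^ 2 / 2 ≤
      (U ^ (2 * δ + 1) - V ^ (2 * δ + 1))  * (U - V) := hux_odd_mono δ U V
  have h2 : (U ^ (δ + 1) - V ^ (δ + 1))  * (U - V) ≤
      ((δ : ℝ) + 1) * (|U| ^ δ + |V| ^ δ) * (U - V) ^ 2 := by
    calc (U ^ (δ + 1) - V ^ (δ + 1))  * (U - V) ≤ |U ^ (δ + 1) - V ^ (δ + 1)| * |U - V| := by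
          rw [← abs_mul]; exact le_abs_self _
      _ ≤ ((δ : ℝ) + 1) * (|U| ^ δ + |V| ^ δ) * |U - V| * |U - V| := by
          gcongr ?_ * |U - V|
          exact hux_pow_lip δ U V
      _ = ((δ : ℝ) + 1) * (|U| ^ δ + |V| ^ δ) * (U - V) ^ 2 := by
          rw [mul_assoc, abs_mul_abs_self]; ring
  have hA : (0:ℝ) < (1 + γ) * ((δ : ℝ) + 1) := by positivity
  have hyU : (1 + γ) * ((δ : ℝ) + 1) * |U| ^ δ ≤
      U ^ (2 * δ) / 4 + ((1 + γ) * ((δ : ℝ) + 1)) ^ 2 := by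
    have h : U ^ (2 * δ) = (|U| ^ δ) ^ 2 := by
      rw [← abs_pow, sq_abs, ← pow_mul, Nat.mul_comm]
    nlinarith [sq_nonneg (|U| ^ δ / 2 - (1 + γ) * ((δ : ℝ) + 1))]
  have hyV : (1 + γ) * ((δ : ℝ) + 1) * |V| ^ δ ≤
      V ^ (2 * δ) / 4 + ((1 + γ) * ((δ : ℝ) + 1)) ^ 2 := by
    have h : V ^ (2 * δ) = (|V| ^ δ) ^ 2 := by
      rw [← abs_pow, sq_abs, ← pow_mul, Nat.mul_comm]
    nlinarith [sq_nonneg (|V| ^ δ / 2 - (1 + γ) * ((δ : ℝ) + 1))]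
  have hpow : (4:ℝ) ≤ 2 ^ (2 * δ) := by
    calc (4:ℝ) = 2 ^ 2 := by norm_num
    _ ≤ 2 ^ (2 * δ) := by
        apply pow_le_pow_right₀ (by norm_num); omega
  rw [hexp]
  have hw2 : (0:ℝ) ≤ (U - V) ^ 2 := sq_nonneg (U - V)
  have hk1 : β * ((U ^ (2 * δ) + V ^ (2 * δ)) * (U - V) ^ 2 / 2) ≤
      β * ((U ^ (2 * δ + 1) - V ^ (2 * δ + 1)) * (U - V)) :=
    mul_le_mul_of_nonneg_left h1 hβ.le
  have hk2 : β * ((1 + γ) * ((U ^ (δ + 1) - V ^ (δ + 1)) * (U - V))) ≤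
      β * ((1 + γ) * (((δ : ℝ) + 1) * (|U| ^ δ + |V| ^ δ) * (U - V) ^ 2)) := by
    apply mul_le_mul_of_nonneg_left _ hβ.le
    exact mul_le_mul_of_nonneg_left h2 (by linarith)
  have hk3 : β * ((1 + γ) * (((δ : ℝ) + 1) * (|U| ^ δ + |V| ^ δ) * (U - V) ^ 2)) ≤
      β * ((U ^ (2 * δ) / 4 + ((1 + γ) * ((δ : ℝ) + 1)) ^ 2 +
            (V ^ (2 * δ) / 4 + ((1 + γ) * ((δ : ℝ) + 1)) ^ 2)) * (U - V) ^ 2) := by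
    apply mul_le_mul_of_nonneg_left _ hβ.le
    have := add_le_add hyU hyV
    have h' : (1 + γ) * (((δ : ℝ) + 1) * (|U| ^ δ + |V| ^ δ) * (U - V) ^ 2)
        = ((1 + γ) * ((δ : ℝ) + 1) * |U| ^ δ + (1 + γ) * ((δ : ℝ) + 1) * |V| ^ δ) * (U - V) ^ 2 := by
      ring
    rw [h']
    exact mul_le_mul_of_nonneg_right this hw2
  have hk4 : 4 * (β / 2 * ((1 + γ) * ((δ : ℝ) + 1)) ^ 2 * (U - V) ^ 2) ≤
      2 ^ (2 * δ) * (β / 2 * ((1 + γ) * ((δ : ℝ) + 1)) ^ 2 * (U - V) ^ 2) :=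
    mul_le_mul_of_nonneg_right hpow (by positivity)
  linarith [hk1, hk2, hk3, hk4]
end

section
/- Let ℙ_p denote polynomials of degree ≤ p on [−1,1] with values in a Hilbert space H. For continuous û : [−1,1] → H, there exists a unique Π̂^p û ∈ ℙ_p satisfying Π̂^p û(1) = û(1) and ∫_{−1}^1 ⟨û − Π̂^p û, v⟩ dt = 0 for all v ∈ ℙ_{p−1}. -/
/-!
Uniqueness: the difference `q` of two candidates vanishes at `1` and is orthogonal
to `ℙ_{p-1}`. By the factor theorem `q = (t - 1) • r` with `r ∈ ℙ_{p-1}`, so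
`0 = ∫ ⟪q, r⟫ = -∫ (1 - t) ‖r‖²`. Hence `r`, and with it `q`, vanishes on `(-1, 1)`,
and a polynomial vanishing on an interval is zero.

Existence: orthogonality to `ℙ_{p-1}` only involves the `H`-valued moments `∫ tʲ • u`, `j < p`,
so together with the endpoint value these are `p + 1` conditions with real coefficients on
`p + 1` coefficients. For real polynomials, uniqueness makes the corresponding square system
injective, hence surjective; solving it for the data `(1, 0)` and `(0, eₖ)` gives real
polynomials `φ, ψₖ`, and `φ • u 1 + ∑ₖ ψₖ • ∫ tᵏ • u` solves the `H`-valued problem.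
-/

open MeasureTheory Set Finset
open scoped RealInnerProductSpace

namespace HpProjection

noncomputable def polyEval {E : Type*} [AddCommMonoid E] [Module ℝ E] (n : ℕ) (c : ℕ → E)
    (t : ℝ) : E :=
  ∑ i ∈ range n, t ^ i • c i

section Module

variable {E : Type*} [AddCommGroup E] [Module ℝ E]

theorem polyEval_sub (n : ℕ) (c d : ℕ → E) :
    polyEval n (c - d) = polyEval n c - polyEval n d := by
  funext t
  simp [polyEval, smul_sub, sum_sub_distrib]

theorem exists_polyEval_sub_polyEval_eq_smul (n : ℕ) (c : ℕ → E) (x₀ : ℝ) :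
    ∃ d : ℕ → E, ∀ t,
      polyEval (n + 1) c t - polyEval (n + 1) c x₀ = (t - x₀) • polyEval n d t := by
  refine ⟨fun j => ∑ i ∈ Ioc j n, x₀ ^ (i - 1 - j) • c i, fun t => ?_⟩
  simp only [polyEval, ← sum_sub_distrib, ← sub_smul, ← geom_sum₂_mul, smul_sum,
    mul_comm _ (t - x₀), mul_smul, sum_smul]
  exact sum_comm' fun i j => by simp only [Finset.mem_range, Finset.mem_Ioc]; omega

end Module

section NormedSpace

variable {F : Type*} [NormedAddCommGroup F] [NormedSpace ℝ F]

@[fun_prop]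
theorem continuous_polyEval (n : ℕ) (c : ℕ → F) : Continuous (polyEval n c) := by
  unfold polyEval
  fun_prop

theorem analyticOnNhd_polyEval (n : ℕ) (c : ℕ → F) :
    AnalyticOnNhd ℝ (polyEval n c) univ := by
  intro t _
  unfold polyEval
  fun_prop

theorem polyEval_eq_zero_of_eqOn_Ioo {n : ℕ} {c : ℕ → F} {a b : ℝ} (hab : a < b)
    (h : EqOn (polyEval n c) 0 (Ioo a b)) : polyEval n c = 0 := by
  have hnhds : polyEval n c =ᶠ[nhds ((a + b) / 2)] 0 :=
    Filter.eventually_of_mem (Ioo_mem_nhds (by linarith) (by linarith)) h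
  funext t
  exact (analyticOnNhd_polyEval n c).eqOn_zero_of_preconnected_of_eventuallyEq_zero
    isPreconnected_univ (mem_univ _) hnhds (mem_univ t)

theorem integral_pow_smul_sub {a b : ℝ} {f g : ℝ → F} (hf : ContinuousOn f (Icc a b))
    (hg : ContinuousOn g (Icc a b)) (j : ℕ) :
    ∫ t in Icc a b, t ^ j • (f t - g t) =
      (∫ t in Icc a b, t ^ j • f t) - ∫ t in Icc a b, t ^ j • g t := by
  have hint {h : ℝ → F} (hh : ContinuousOn h (Icc a b)) :
      IntegrableOn (fun t => t ^ j • h t) (Icc a b) :=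
    ((continuous_pow j).continuousOn.smul hh).integrableOn_Icc
  simp only [smul_sub]
  exact integral_sub (hint hf) (hint hg)

end NormedSpace

theorem eqOn_zero_of_nonneg_of_setIntegral_eq_zero {a b : ℝ} {g : ℝ → ℝ} (hab : a < b)
    (hg : ContinuousOn g (Icc a b)) (hnonneg : ∀ t ∈ Icc a b, 0 ≤ g t)
    (hint : ∫ t in Icc a b, g t = 0) : EqOn g 0 (Icc a b) := by
  have hae : g =ᵐ[volume.restrict (Icc a b)] 0 :=
    (setIntegral_eq_zero_iff_of_nonneg_ae
      ((ae_restrict_iff' measurableSet_Icc).2 (Filter.Eventually.of_forall hnonneg))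
      hg.integrableOn_Icc).1 hint
  exact Measure.eqOn_Icc_of_ae_eq volume hab.ne hae hg continuousOn_const

section InnerProductSpace

variable {E : Type*} [NormedAddCommGroup E] [InnerProductSpace ℝ E] [CompleteSpace E]
  {a b : ℝ} {f g : ℝ → E}

theorem integral_inner_polyEval (hf : ContinuousOn f (Icc a b)) (p : ℕ) (d : ℕ → E) :
    ∫ t in Icc a b, ⟪f t, polyEval p d t⟫ =
      ∑ j ∈ range p, ⟪d j, ∫ t in Icc a b, t ^ j • f t⟫ := by
  have hmoment (j : ℕ) : IntegrableOn (fun t => t ^ j • f t) (Icc a b) :=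
    ((continuous_pow j).continuousOn.smul hf).integrableOn_Icc
  have hexpand : (fun t => ⟪f t, polyEval p d t⟫) =
      fun t => ∑ j ∈ range p, ⟪d j, t ^ j • f t⟫ := by
    funext t
    simp only [polyEval, inner_sum, real_inner_smul_right, real_inner_comm]
  rw [hexpand, integral_finsetSum _ fun j _ => (hmoment j).const_inner (d j)]
  exact sum_congr rfl fun j _ => integral_inner (hmoment j) (d j)

theorem forall_integral_inner_polyEval_eq_zero_iff (hf : ContinuousOn f (Icc a b)) (p : ℕ) :
    (∀ d : ℕ → E, ∫ t in Icc a b, ⟪f t, polyEval p d t⟫ = 0) ↔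
      ∀ j < p, ∫ t in Icc a b, t ^ j • f t = 0 := by
  simp only [integral_inner_polyEval hf]
  refine ⟨fun h j hj => ?_, fun h d => sum_eq_zero fun j hj => ?_⟩
  · have := h fun i => if i = j then ∫ t in Icc a b, t ^ j • f t else 0
    rwa [sum_eq_single j (fun i _ hij => by simp [hij]) (by simp [hj]), if_pos rfl,
      inner_self_eq_zero] at this
  · rw [h j (Finset.mem_range.1 hj), inner_zero_right]

theorem forall_integral_inner_sub_polyEval_eq_zero_iff (hf : ContinuousOn f (Icc a b))
    (hg : ContinuousOn g (Icc a b)) (p : ℕ) :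
    (∀ d : ℕ → E, ∫ t in Icc a b, ⟪f t - g t, polyEval p d t⟫ = 0) ↔
      ∀ j < p, ∫ t in Icc a b, t ^ j • f t = ∫ t in Icc a b, t ^ j • g t := by
  rw [forall_integral_inner_polyEval_eq_zero_iff (f := fun t => f t - g t) (hf.sub hg)]
  simp only [integral_pow_smul_sub hf hg, sub_eq_zero]

theorem polyEval_eq_zero_of_moments_eq_zero {p : ℕ} {c : ℕ → E} (hab : a < b)
    (hb : polyEval (p + 1) c b = 0)
    (hmom : ∀ j < p, ∫ t in Icc a b, t ^ j • polyEval (p + 1) c t = 0) :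
    polyEval (p + 1) c = 0 := by
  obtain ⟨d, hfactor⟩ := exists_polyEval_sub_polyEval_eq_smul p c b
  simp only [hb, sub_zero] at hfactor
  set q := polyEval (p + 1) c
  set r := polyEval p d
  have hinner (t : ℝ) : ⟪q t, r t⟫ = -((b - t) * ‖r t‖ ^ 2) := by
    rw [hfactor, real_inner_smul_left, real_inner_self_eq_norm_sq]
    ring
  have horth : ∫ t in Icc a b, ⟪q t, r t⟫ = 0 :=
    (forall_integral_inner_polyEval_eq_zero_iff (continuous_polyEval _ _).continuousOn p).2
      hmom d
  simp only [hinner, integral_neg, neg_eq_zero] at horth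
  have hr : EqOn (fun t => (b - t) * ‖r t‖ ^ 2) 0 (Icc a b) :=
    eqOn_zero_of_nonneg_of_setIntegral_eq_zero hab (by fun_prop)
      (fun t ht => mul_nonneg (sub_nonneg.2 ht.2) (sq_nonneg _)) horth
  refine polyEval_eq_zero_of_eqOn_Ioo hab fun t ht => ?_
  have hrt : r t = 0 := by
    simpa [sub_ne_zero.2 ht.2.ne'] using hr (Ioo_subset_Icc_self ht)
  rw [Pi.zero_apply, ← smul_zero (t - b), ← hrt]
  exact hfactor t

end InnerProductSpace

open Polynomial

theorem polyEval_coeff_eq_eval {n : ℕ} {P : ℝ[X]} (hP : P ∈ degreeLT ℝ n) :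
    polyEval n P.coeff = fun t => P.eval t := by
  funext t
  rcases eq_or_ne P 0 with rfl | hP0
  · simp [polyEval]
  rw [eval_eq_sum_range' ((natDegree_lt_iff_degree_lt hP0).2 (mem_degreeLT.1 hP))]
  exact sum_congr rfl fun i _ => mul_comm _ _

noncomputable def endpointMomentMap (a b : ℝ) (p : ℕ) :
    degreeLT ℝ (p + 1) →ₗ[ℝ] ℝ × (Fin p → ℝ) where
  toFun P := ((P : ℝ[X]).eval b, fun j => ∫ t in Icc a b, t ^ (j : ℕ) * (P : ℝ[X]).eval t)
  map_add' P Q := by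
    have hint (R : ℝ[X]) (j : ℕ) : IntegrableOn (fun t => t ^ j * R.eval t) (Icc a b) :=
      (by fun_prop : Continuous fun t => t ^ j * R.eval t).integrableOn_Icc
    ext j
    · simp
    · simp [mul_add, integral_add (hint _ _) (hint _ _)]
  map_smul' r P := by
    ext j
    · simp
    · simp [mul_left_comm _ r, integral_const_mul]

theorem surjective_endpointMomentMap {a b : ℝ} (hab : a < b) (p : ℕ) :
    Function.Surjective (endpointMomentMap a b p) := by
  have : FiniteDimensional ℝ (degreeLT ℝ (p + 1)) :=
    (degreeLTEquiv ℝ (p + 1)).symm.finiteDimensional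
  refine (LinearMap.injective_iff_surjective_of_finrank_eq_finrank ?_).1 ?_
  · rw [(degreeLTEquiv ℝ (p + 1)).finrank_eq]
    simp [add_comm]
  rw [← LinearMap.ker_eq_bot, LinearMap.ker_eq_bot']
  intro P hP
  simp only [endpointMomentMap, LinearMap.coe_mk, AddHom.coe_mk, Prod.mk_eq_zero,
    funext_iff] at hP
  have hq := polyEval_coeff_eq_eval P.2
  have hzero := polyEval_eq_zero_of_moments_eq_zero hab (c := (P : ℝ[X]).coeff)
    (by rw [hq]; exact hP.1) (fun j hj => by rw [hq]; exact hP.2 ⟨j, hj⟩)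
  exact Subtype.ext (Polynomial.funext fun t => by simpa [hq] using congrFun hzero t)

theorem exists_real_polyEval_eq_of_moments {a b : ℝ} (hab : a < b) (p : ℕ) (y : ℝ)
    (m : ℕ → ℝ) :
    ∃ c : ℕ → ℝ, polyEval (p + 1) c b = y ∧
      ∀ j < p, ∫ t in Icc a b, t ^ j • polyEval (p + 1) c t = m j := by
  obtain ⟨P, hP⟩ := surjective_endpointMomentMap hab p (y, fun j => m j)
  simp only [endpointMomentMap, LinearMap.coe_mk, AddHom.coe_mk, Prod.mk.injEq,
    funext_iff] at hP
  refine ⟨(P : ℝ[X]).coeff, ?_, fun j hj => ?_⟩ <;> rw [polyEval_coeff_eq_eval P.2]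
  · exact hP.1
  · exact hP.2 ⟨j, hj⟩

theorem exists_polyEval_eq_of_moments {F : Type*} [NormedAddCommGroup F] [NormedSpace ℝ F]
    [CompleteSpace F] {a b : ℝ} (hab : a < b) (p : ℕ) (y : F) (m : ℕ → F) :
    ∃ c : ℕ → F, polyEval (p + 1) c b = y ∧
      ∀ j < p, ∫ t in Icc a b, t ^ j • polyEval (p + 1) c t = m j := by
  obtain ⟨φ, hφb, hφm⟩ := exists_real_polyEval_eq_of_moments hab p 1 0
  choose ψ hψb hψm using fun k =>
    exists_real_polyEval_eq_of_moments hab p 0 fun j => if j = k then 1 else 0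
  set c : ℕ → F := fun i => φ i • y + ∑ k ∈ range p, ψ k i • m k
  have heval (t : ℝ) : polyEval (p + 1) c t =
      polyEval (p + 1) φ t • y + ∑ k ∈ range p, polyEval (p + 1) (ψ k) t • m k := by
    simp only [c, polyEval, smul_add, sum_add_distrib, smul_sum, sum_smul, smul_assoc]
    rw [sum_comm]
  refine ⟨c, by simp [heval, hφb, hψb], fun j hj => ?_⟩
  have hint (e : ℕ → ℝ) (v : F) :
      IntegrableOn (fun t => (t ^ j • polyEval (p + 1) e t) • v) (Icc a b) :=
    (by fun_prop : Continuous fun t => (t ^ j • polyEval (p + 1) e t) • v).integrableOn_Icc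
  calc ∫ t in Icc a b, t ^ j • polyEval (p + 1) c t
      = ∫ t in Icc a b, (t ^ j • polyEval (p + 1) φ t) • y +
          ∑ k ∈ range p, (t ^ j • polyEval (p + 1) (ψ k) t) • m k := by
        simp only [heval, smul_add, smul_sum, smul_assoc]
    _ = (∫ t in Icc a b, t ^ j • polyEval (p + 1) φ t) • y +
          ∑ k ∈ range p, (∫ t in Icc a b, t ^ j • polyEval (p + 1) (ψ k) t) • m k := by
        rw [integral_add (hint _ _) (integrable_finsetSum _ fun k _ => hint _ _),
          integral_finsetSum _ fun k _ => hint _ _]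
        simp only [integral_smul_const]
    _ = m j := by
        simp only [hφm j hj, fun k => hψm k j hj]
        simp [hj]

end HpProjection

open HpProjection

/-- Well-definedness of the hp-DG time projection: for a continuous Hilbert-space-valued
function `û : [−1,1] → H` there is a unique polynomial `Π̂^p û` of degree ≤ p with
`Π̂^p û(1) = û(1)` and `∫_{−1}^1 ⟨û − Π̂^p û, v⟩ dt = 0` for all polynomials `v` of degree
≤ p − 1. -/
theorem hp_projection_well_defined (H : Type*) [NormedAddCommGroup H]
    [InnerProductSpace ℝ H] [CompleteSpace H] (p : ℕ) (u : ℝ → H)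
    (hu : ContinuousOn u (Icc (-1 : ℝ) 1)) :
    ∃! Pu : ℝ → H,
      (∃ c : ℕ → H, Pu = fun t => ∑ i ∈ Finset.range (p + 1), t ^ i • c i) ∧
      Pu 1 = u 1 ∧
      ∀ v : ℝ → H, (∃ c : ℕ → H, v = fun t => ∑ i ∈ Finset.range p, t ^ i • c i) →
        ∫ t in Icc (-1 : ℝ) 1, ⟪u t - Pu t, v t⟫ = 0 := by
  have hab : (-1 : ℝ) < 1 := by norm_num
  have horth (c : ℕ → H) :
      (∀ v : ℝ → H, (∃ d : ℕ → H, v = fun t => ∑ i ∈ Finset.range p, t ^ i • d i) →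
        ∫ t in Icc (-1 : ℝ) 1, ⟪u t - polyEval (p + 1) c t, v t⟫ = 0) ↔
      ∀ j < p, ∫ t in Icc (-1 : ℝ) 1, t ^ j • u t =
        ∫ t in Icc (-1 : ℝ) 1, t ^ j • polyEval (p + 1) c t := by
    rw [← forall_integral_inner_sub_polyEval_eq_zero_iff hu (continuous_polyEval _ _).continuousOn]
    exact ⟨fun h d => h _ ⟨d, rfl⟩, fun h _ ⟨d, hv⟩ => hv ▸ h d⟩
  obtain ⟨c, hc1, hcm⟩ := exists_polyEval_eq_of_moments hab p (u 1) fun j =>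
    ∫ t in Icc (-1 : ℝ) 1, t ^ j • u t
  refine ⟨polyEval (p + 1) c, ⟨⟨c, rfl⟩, hc1, (horth c).2 fun j hj => (hcm j hj).symm⟩, ?_⟩
  rintro P ⟨⟨c', hP⟩, hc'1, hc'orth⟩
  obtain rfl : P = polyEval (p + 1) c' := hP
  have hc'm := (horth c').1 hc'orth
  rw [← sub_eq_zero, ← polyEval_sub]
  refine polyEval_eq_zero_of_moments_eq_zero hab (by simp [polyEval_sub, hc1, hc'1])
    fun j hj => ?_
  simp only [polyEval_sub, Pi.sub_apply]
  rw [integral_pow_smul_sub (by fun_prop) (by fun_prop), ← hc'm j hj, hcm j hj, sub_self]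
end

section
/- For a function φ that is piecewise polynomial of degree p_n in time on J_n = (t_{n−1}, t_n] with values in L²(Ω), the inverse-type estimate sup_{t∈J_n} ‖φ(t)‖²_{L²} ≤ C (log(p_n + 2) ∫_{t_{n−1}}^{t_n} ‖φ′(t)‖_{L²}² (t − t_{n−1}) dt + ‖φ(t_n)‖²_{L²}) holds with C independent of k_n and p_n. -/
/-!
Testing `φ` against the fixed vector `φ s` turns the estimate into one for the real polynomial
`Q = ⟪φ ·, φ s⟫` of degree `≤ p`, at the cost of a factor `‖φ s‖²`. With `k = t₁ - t₀`, the
fundamental theorem of calculus and a weighted Cauchy–Schwarz inequality give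
`Q(x)² ≤ 2 Q(t₁)² + 2 log (k / (x - t₀)) ∫ Q'(τ)² (τ - t₀) dτ`, and the logarithm is at most
`2 log (p + 2)` as long as `x - t₀ ≥ k / (p + 2)²`. On the remaining layer next to `t₀` the bound
is extrapolated by Chebyshev's growth estimate: a polynomial of degree `≤ p` bounded by `M` on
`[a, b]` is bounded by `cosh 2 · M` within distance `(b - a) / (p + 1)²` of it, because after
rescaling `[a, b]` to `[-1, 1]` it is dominated by `T_p`, and `T_p(1 + 2 / (p + 1)²) ≤ cosh 2`.
-/

open MeasureTheory Set Real
open scoped RealInnerProductSpace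

theorem Real.one_add_sq_div_two_le_cosh (u : ℝ) : 1 + u ^ 2 / 2 ≤ cosh u := by
  have hsinh : (u / 2) ^ 2 ≤ sinh (u / 2) ^ 2 := by
    rcases le_total 0 u with hu | hu
    · have := self_le_sinh_iff.2 (by linarith : 0 ≤ u / 2)
      nlinarith
    · have := sinh_le_self_iff.2 (by linarith : u / 2 ≤ 0)
      nlinarith
  calc 1 + u ^ 2 / 2 = 1 + 2 * (u / 2) ^ 2 := by ring
    _ ≤ 1 + 2 * sinh (u / 2) ^ 2 := by linarith
    _ = cosh u := by
      rw [show u = 2 * (u / 2) by ring, cosh_two_mul, cosh_sq]; ring_nf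

namespace Polynomial.Chebyshev

theorem eval_T_real_le_cosh_two {n : ℕ} {z : ℝ} (h₁ : 1 ≤ z) (h₂ : z ≤ 1 + 2 / (n + 1) ^ 2) :
    (T ℝ n).eval z ≤ cosh 2 := by
  have hn : (0 : ℝ) < n + 1 := by positivity
  have harcosh : arcosh z ≤ 2 / (n + 1) := by
    rw [← arcosh_cosh (by positivity : (0 : ℝ) ≤ 2 / (n + 1)),
      arcosh_le_arcosh (by linarith) (cosh_pos _)]
    refine h₂.trans (le_of_eq_of_le ?_ (one_add_sq_div_two_le_cosh _))
    field_simp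
  rw [← cosh_arcosh h₁, T_real_cosh, cosh_le_cosh, abs_of_nonneg (by norm_num : (0 : ℝ) ≤ 2),
    abs_of_nonneg (mul_nonneg (by positivity) (arcosh_nonneg h₁))]
  calc ((n : ℤ) : ℝ) * arcosh z ≤ n * (2 / (n + 1)) := by
        push_cast; exact mul_le_mul_of_nonneg_left harcosh (by positivity)
    _ ≤ 2 := by rw [mul_div_assoc', div_le_iff₀ hn]; linarith

theorem abs_eval_le_eval_T_real_mul {n : ℕ} {P : ℝ[X]} (hP : P.degree ≤ n) {M : ℝ}
    (hM : ∀ x ∈ Icc (-1 : ℝ) 1, |P.eval x| ≤ M) {z : ℝ} (hz : 1 ≤ z) :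
    |P.eval z| ≤ (T ℝ n).eval z * M := by
  rcases (le_trans (abs_nonneg _) (hM 1 (by simp))).eq_or_lt with hM0 | hM0
  · have : P = 0 := by
      refine P.eq_zero_of_infinite_isRoot ((Icc_infinite (by norm_num : (-1 : ℝ) < 1)).mono ?_)
      intro x hx
      simpa [← hM0] using hM x hx
    simp [this, ← hM0]
  have hbound : ∀ Q : ℝ[X], Q.degree ≤ n → (∀ x ∈ Icc (-1 : ℝ) 1, |Q.eval x| ≤ M) →
      Q.eval z ≤ (T ℝ n).eval z * M := by
    intro Q hQ hQM
    have := eval_iterate_derivative_le_of_forall_abs_le_one (k := 0) hz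
      ((degree_C_mul (inv_ne_zero hM0.ne')).trans_le hQ) (P := Polynomial.C M⁻¹ * Q)
      fun x hx => by
        rw [eval_mul, eval_C, abs_mul, abs_inv, abs_of_pos hM0, inv_mul_le_one₀ hM0]
        exact hQM x hx
    simp only [Function.iterate_zero, id, eval_mul, eval_C] at this
    rwa [inv_mul_le_iff₀ hM0, mul_comm] at this
  refine abs_le.2 ⟨?_, hbound P hP hM⟩
  have := hbound (-P) (by rwa [degree_neg]) (by simpa using hM)
  rw [eval_neg] at this
  linarith

end Polynomial.Chebyshev

namespace Polynomial

theorem abs_eval_le_cosh_two_mul {n : ℕ} {P : ℝ[X]} (hP : P.natDegree ≤ n) {a b M y : ℝ}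
    (hab : a < b) (hM : ∀ x ∈ Icc a b, |P.eval x| ≤ M)
    (hy₁ : a - (b - a) / (n + 1) ^ 2 ≤ y) (hy₂ : y ≤ a) :
    |P.eval y| ≤ cosh 2 * M := by
  set c := (a + b) / 2
  set d := (b - a) / 2
  have hd : 0 < d := by simp only [d]; linarith
  set S := P.comp (C c - C d * X)
  have hS : ∀ x, S.eval x = P.eval (c - d * x) := fun x => by simp [S]
  have hSdeg : S.degree ≤ n := by
    refine degree_le_of_natDegree_le (natDegree_comp_le.trans ?_)
    have : (C c - C d * X).natDegree ≤ 1 := by compute_degree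
    nlinarith
  have hSM : ∀ x ∈ Icc (-1 : ℝ) 1, |S.eval x| ≤ M := fun x ⟨hx₁, hx₂⟩ => by
    rw [hS]
    refine hM _ ⟨?_, ?_⟩ <;> simp only [c, d] <;> nlinarith
  set z := (c - y) / d
  have hz₁ : 1 ≤ z := by rw [le_div_iff₀ hd]; simp only [c, d]; linarith
  have hz₂ : z ≤ 1 + 2 / (n + 1) ^ 2 := by
    rw [div_le_iff₀ hd]
    have : (1 + 2 / ((n : ℝ) + 1) ^ 2) * d = d + (b - a) / (n + 1) ^ 2 := by
      simp only [d]; field_simp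
    rw [this]; simp only [c, d]; linarith
  have hM0 : 0 ≤ M := (abs_nonneg _).trans (hM a ⟨le_rfl, hab.le⟩)
  calc |P.eval y| = |S.eval z| := by rw [hS, mul_div_cancel₀ _ hd.ne', sub_sub_cancel]
    _ ≤ (Chebyshev.T ℝ n).eval z * M := Chebyshev.abs_eval_le_eval_T_real_mul hSdeg hSM hz₁
    _ ≤ cosh 2 * M := by gcongr; exact Chebyshev.eval_T_real_le_cosh_two hz₁ hz₂

end Polynomial

theorem sq_le_mul_of_forall_two_mul_le {J A B : ℝ} (hJ : 0 ≤ J) (hA : 0 ≤ A) (hB : 0 ≤ B)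
    (h : ∀ l > 0, 2 * J ≤ l * A + B / l) : J ^ 2 ≤ A * B := by
  rcases hJ.eq_or_lt with rfl | hJ
  · simpa using mul_nonneg hA hB
  rcases hA.eq_or_lt with rfl | hA
  · have := h ((B + 1) / J) (by positivity)
    rw [mul_zero, zero_add, div_div_eq_mul_div, le_div_iff₀ (by positivity)] at this
    nlinarith
  have := h (J / A) (by positivity)
  rw [div_mul_cancel₀ _ hA.ne', div_div_eq_mul_div, ← sub_le_iff_le_add', le_div_iff₀ hJ] at this
  nlinarith

theorem sq_integral_abs_le_integral_mul_integral_inv {α : Type*} [MeasurableSpace α]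
    {μ : Measure α} {g w : α → ℝ} (hw : ∀ᵐ a ∂μ, 0 < w a) (hg : Integrable g μ)
    (hgw : Integrable (fun a => g a ^ 2 * w a) μ) (hw' : Integrable (fun a => (w a)⁻¹) μ) :
    (∫ a, |g a| ∂μ) ^ 2 ≤ (∫ a, g a ^ 2 * w a ∂μ) * ∫ a, (w a)⁻¹ ∂μ := by
  refine sq_le_mul_of_forall_two_mul_le (integral_nonneg fun _ => abs_nonneg _)
    (integral_nonneg_of_ae (hw.mono fun a ha => by positivity))
    (integral_nonneg_of_ae (hw.mono fun a ha => by positivity)) fun l hl => ?_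
  have hpt : ∀ᵐ a ∂μ, 2 * |g a| ≤ l * (g a ^ 2 * w a) + (w a)⁻¹ / l := by
    filter_upwards [hw] with a ha
    have : l * (g a ^ 2 * w a) + (w a)⁻¹ / l - 2 * |g a| =
        (l * |g a| * w a - 1) ^ 2 / (l * w a) := by
      field_simp
      rw [← sq_abs (g a)]
      ring
    nlinarith [show 0 ≤ (l * |g a| * w a - 1) ^ 2 / (l * w a) by positivity]
  calc 2 * ∫ a, |g a| ∂μ = ∫ a, 2 * |g a| ∂μ := (integral_const_mul _ _).symm
    _ ≤ ∫ a, l * (g a ^ 2 * w a) + (w a)⁻¹ / l ∂μ :=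
      integral_mono_ae (hg.abs.const_mul 2) ((hgw.const_mul l).add (hw'.div_const l)) hpt
    _ = l * ∫ a, g a ^ 2 * w a ∂μ + (∫ a, (w a)⁻¹ ∂μ) / l := by
      rw [integral_add (hgw.const_mul l) (hw'.div_const l), integral_const_mul, integral_div]

theorem integral_Ioc_inv_sub {t₀ x t₁ : ℝ} (hx₀ : t₀ < x) (hx₁ : x ≤ t₁) :
    ∫ τ in Ioc x t₁, (τ - t₀)⁻¹ = log ((t₁ - t₀) / (x - t₀)) := by
  rw [← intervalIntegral.integral_of_le hx₁,
    intervalIntegral.integral_comp_sub_right (fun u => u⁻¹) t₀,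
    integral_inv_of_pos (by linarith) (by linarith)]

theorem sq_le_two_mul_sq_add_two_log_mul_integral {f f' : ℝ → ℝ}
    (hf : ∀ τ, HasDerivAt f (f' τ) τ) (hf' : Continuous f') {t₀ x t₁ : ℝ} (hx₀ : t₀ < x)
    (hx₁ : x ≤ t₁) :
    f x ^ 2 ≤ 2 * f t₁ ^ 2 +
      2 * log ((t₁ - t₀) / (x - t₀)) * ∫ τ in Ioc t₀ t₁, f' τ ^ 2 * (τ - t₀) := by
  set J := ∫ τ in Ioc x t₁, |f' τ|
  have hftc : |f x| ≤ |f t₁| + J := by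
    have h := intervalIntegral.integral_eq_sub_of_hasDerivAt (fun τ _ => hf τ)
      (hf'.intervalIntegrable x t₁)
    have := intervalIntegral.abs_integral_le_integral_abs (μ := volume) (f := f') hx₁
    rw [h, intervalIntegral.integral_of_le hx₁] at this
    calc |f x| = |f t₁ - (f t₁ - f x)| := by rw [sub_sub_cancel]
      _ ≤ |f t₁| + |f t₁ - f x| := abs_sub _ _
      _ ≤ |f t₁| + J := by gcongr
  have hCS : J ^ 2 ≤ (∫ τ in Ioc x t₁, f' τ ^ 2 * (τ - t₀)) * log ((t₁ - t₀) / (x - t₀)) := by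
    rw [← integral_Ioc_inv_sub hx₀ hx₁]
    refine sq_integral_abs_le_integral_mul_integral_inv ?_ hf'.integrableOn_Ioc
      (by fun_prop : Continuous fun τ => f' τ ^ 2 * (τ - t₀)).integrableOn_Ioc ?_
    · filter_upwards [ae_restrict_mem measurableSet_Ioc] with τ hτ
      linarith [hτ.1]
    · refine (ContinuousOn.integrableOn_Icc ?_).mono_set Ioc_subset_Icc_self
      exact (continuousOn_id.sub continuousOn_const).inv₀ fun τ hτ => by
        simp only [Pi.sub_apply, id]; linarith [hτ.1]
  have hsub : ∫ τ in Ioc x t₁, f' τ ^ 2 * (τ - t₀) ≤ ∫ τ in Ioc t₀ t₁, f' τ ^ 2 * (τ - t₀) := by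
    refine setIntegral_mono_set
      (by fun_prop : Continuous fun τ => f' τ ^ 2 * (τ - t₀)).integrableOn_Ioc ?_
      (Ioc_subset_Ioc_left hx₀.le).eventuallyLE
    filter_upwards [ae_restrict_mem measurableSet_Ioc] with τ hτ
    exact mul_nonneg (sq_nonneg _) (by linarith [hτ.1])
  have hlog : 0 ≤ log ((t₁ - t₀) / (x - t₀)) :=
    log_nonneg (by rw [le_div_iff₀ (by linarith)]; linarith)
  have hJ : 0 ≤ J := setIntegral_nonneg measurableSet_Ioc fun _ _ => abs_nonneg _
  calc f x ^ 2 ≤ (|f t₁| + J) ^ 2 := by rw [← sq_abs]; gcongr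
    _ ≤ 2 * f t₁ ^ 2 + 2 * J ^ 2 := by nlinarith [sq_abs (f t₁), sq_nonneg (|f t₁| - J)]
    _ ≤ _ := by nlinarith [mul_le_mul_of_nonneg_right hsub hlog]

namespace Polynomial

theorem sq_eval_le_log_mul_integral_add_sq_eval {p : ℕ} {Q : ℝ[X]} (hQ : Q.natDegree ≤ p)
    {t₀ t₁ x : ℝ} (hx : x ∈ Ioc t₀ t₁) :
    Q.eval x ^ 2 ≤ 4 * cosh 2 ^ 2 *
      (log (p + 2) * (∫ τ in Ioc t₀ t₁, Q.derivative.eval τ ^ 2 * (τ - t₀)) + Q.eval t₁ ^ 2) := by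
  set L := log ((p : ℝ) + 2)
  set I := ∫ τ in Ioc t₀ t₁, Q.derivative.eval τ ^ 2 * (τ - t₀)
  have hL : 0 ≤ L := log_nonneg (by linarith [(Nat.cast_nonneg p : (0 : ℝ) ≤ p)])
  have hI : 0 ≤ I := setIntegral_nonneg measurableSet_Ioc fun τ hτ =>
    mul_nonneg (sq_nonneg _) (by linarith [hτ.1])
  have hcosh : 1 ≤ cosh 2 ^ 2 := one_le_pow₀ (one_le_cosh 2)
  have hp : (0 : ℝ) < (p + 2) ^ 2 := by positivity
  set m := t₀ + (t₁ - t₀) / (p + 2) ^ 2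
  have hk : 0 < t₁ - t₀ := by linarith [hx.1, hx.2]
  have hm : t₀ < m := lt_add_of_pos_right _ (div_pos hk hp)
  have hfar : ∀ y ∈ Icc m t₁, Q.eval y ^ 2 ≤ 2 * Q.eval t₁ ^ 2 + 4 * L * I := by
    intro y ⟨hy₁, hy₂⟩
    have hlog : log ((t₁ - t₀) / (y - t₀)) ≤ 2 * L := by
      rw [show 2 * L = log ((p + 2) ^ 2) by rw [log_pow]; push_cast; ring]
      refine log_le_log (div_pos (by linarith) (by linarith)) ?_
      rw [div_le_iff₀ (by linarith), ← div_le_iff₀' hp]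
      linarith
    have := sq_le_two_mul_sq_add_two_log_mul_integral (fun τ => Q.hasDerivAt τ)
      Q.derivative.continuous (hm.trans_le hy₁) hy₂
    nlinarith [mul_le_mul_of_nonneg_right hlog hI]
  have hR : 2 * Q.eval t₁ ^ 2 + 4 * L * I ≤ 4 * (L * I + Q.eval t₁ ^ 2) := by
    nlinarith [sq_nonneg (Q.eval t₁)]
  rcases le_or_gt m x with hxm | hxm
  · calc Q.eval x ^ 2 ≤ 4 * (L * I + Q.eval t₁ ^ 2) := (hfar x ⟨hxm, hx.2⟩).trans hR
      _ ≤ _ := by nlinarith [mul_nonneg hL hI, sq_nonneg (Q.eval t₁)]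
  have hδ : (m - t₀) * (p + 2) ^ 2 = t₁ - t₀ := by simp only [m]; field_simp; ring
  have hgap : (m - t₀) * (p + 1) ^ 2 ≤ t₁ - m := by
    have : ((p : ℝ) + 1) ^ 2 + 1 ≤ (p + 2) ^ 2 := by nlinarith [(Nat.cast_nonneg p : (0 : ℝ) ≤ p)]
    nlinarith [mul_le_mul_of_nonneg_left this (sub_pos.2 hm).le]
  have hmt : m < t₁ := by nlinarith [mul_pos (sub_pos.2 hm) (by positivity : (0 : ℝ) < (p + 1) ^ 2)]
  have hnear : m - (t₁ - m) / (p + 1) ^ 2 ≤ x := by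
    rw [sub_le_comm, le_div_iff₀ (by positivity)]
    nlinarith [mul_le_mul_of_nonneg_right hx.1.le (by positivity : (0 : ℝ) ≤ (p + 1) ^ 2)]
  have := abs_eval_le_cosh_two_mul hQ hmt (fun y hy => abs_le_sqrt (hfar y hy)) hnear hxm.le
  calc Q.eval x ^ 2 ≤ (cosh 2 * √(2 * Q.eval t₁ ^ 2 + 4 * L * I)) ^ 2 := by
        rw [← sq_abs]; gcongr
    _ = cosh 2 ^ 2 * (2 * Q.eval t₁ ^ 2 + 4 * L * I) := by
        rw [mul_pow, sq_sqrt (by nlinarith [mul_nonneg hL hI, sq_nonneg (Q.eval t₁)])]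
    _ ≤ cosh 2 ^ 2 * (4 * (L * I + Q.eval t₁ ^ 2)) := by gcongr
    _ = _ := by ring

end Polynomial

section VectorPolynomial

variable {H : Type*} [NormedAddCommGroup H] [InnerProductSpace ℝ H] {p : ℕ} {φ φ' : ℝ → H}

open Polynomial in
theorem exists_polynomial_eval_eq_inner
    (hφ : ∃ c : ℕ → H, ∀ s, φ s = ∑ i ∈ Finset.range (p + 1), s ^ i • c i)
    (hφ' : ∀ s, HasDerivAt φ (φ' s) s) (v : H) :
    ∃ Q : ℝ[X], Q.natDegree ≤ p ∧ (∀ y, Q.eval y = ⟪φ y, v⟫) ∧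
      ∀ y, Q.derivative.eval y = ⟪φ' y, v⟫ := by
  obtain ⟨c, hc⟩ := hφ
  set Q : ℝ[X] := ∑ i ∈ Finset.range (p + 1), C ⟪c i, v⟫ * X ^ i
  have hQ : ∀ y, Q.eval y = ⟪φ y, v⟫ := fun y => by
    rw [hc, sum_inner, eval_finsetSum]
    refine Finset.sum_congr rfl fun i _ => ?_
    rw [real_inner_smul_left, eval_mul, eval_C, eval_pow, eval_X, mul_comm]
  refine ⟨Q, natDegree_sum_le_of_forall_le _ _ fun i hi => ?_, hQ, fun y => ?_⟩
  · exact (natDegree_C_mul_X_pow_le _ _).trans (Finset.mem_range_succ_iff.1 hi)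
  · have hder := (hφ' y).inner ℝ (hasDerivAt_const y v)
    simp only [inner_zero_right, zero_add] at hder
    exact (Q.hasDerivAt y).unique (by simpa only [← hQ] using hder)

theorem continuous_of_hasDerivAt_of_eq_sum_pow_smul
    (hφ : ∃ c : ℕ → H, ∀ s, φ s = ∑ i ∈ Finset.range (p + 1), s ^ i • c i)
    (hφ' : ∀ s, HasDerivAt φ (φ' s) s) : Continuous φ' := by
  obtain ⟨c, hc⟩ := hφ
  have hφ : ContDiff ℝ 1 φ := by rw [funext hc]; fun_prop
  rw [show φ' = deriv φ from funext fun s => (hφ' s).deriv.symm]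
  exact hφ.continuous_deriv le_rfl

theorem norm_sq_le_log_mul_integral_add_norm_sq
    (hφ : ∃ c : ℕ → H, ∀ s, φ s = ∑ i ∈ Finset.range (p + 1), s ^ i • c i)
    (hφ' : ∀ s, HasDerivAt φ (φ' s) s) {t₀ t₁ s : ℝ} (hs : s ∈ Ioc t₀ t₁) :
    ‖φ s‖ ^ 2 ≤ 4 * cosh 2 ^ 2 *
      (log (p + 2) * (∫ τ in Ioc t₀ t₁, ‖φ' τ‖ ^ 2 * (τ - t₀)) + ‖φ t₁‖ ^ 2) := by
  obtain ⟨Q, hQdeg, hQ, hQ'⟩ := exists_polynomial_eval_eq_inner hφ hφ' (φ s)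
  have hcore := Q.sq_eval_le_log_mul_integral_add_sq_eval hQdeg hs
  rw [hQ, hQ, real_inner_self_eq_norm_sq] at hcore
  have hinner (x y : H) : ⟪x, y⟫ ^ 2 ≤ ‖x‖ ^ 2 * ‖y‖ ^ 2 := by
    rw [← mul_pow, ← sq_abs]; gcongr; exact abs_real_inner_le_norm x y
  set I := ∫ τ in Ioc t₀ t₁, ‖φ' τ‖ ^ 2 * (τ - t₀)
  have hφ'c := continuous_of_hasDerivAt_of_eq_sum_pow_smul hφ hφ'
  have hint : ∫ τ in Ioc t₀ t₁, Q.derivative.eval τ ^ 2 * (τ - t₀) ≤ ‖φ s‖ ^ 2 * I := by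
    rw [← integral_const_mul]
    refine setIntegral_mono_on (by fun_prop : Continuous _).integrableOn_Ioc
      (by fun_prop : Continuous _).integrableOn_Ioc measurableSet_Ioc fun τ hτ => ?_
    rw [hQ', ← mul_assoc, mul_comm _ (‖φ' τ‖ ^ 2)]
    exact mul_le_mul_of_nonneg_right (hinner _ _) (by linarith [hτ.1])
  have hI : 0 ≤ I := setIntegral_nonneg measurableSet_Ioc fun τ hτ =>
    mul_nonneg (sq_nonneg _) (by linarith [hτ.1])
  have hL : 0 ≤ log ((p : ℝ) + 2) := log_nonneg (by linarith [(Nat.cast_nonneg p : (0 : ℝ) ≤ p)])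
  set K := 4 * cosh 2 ^ 2 * (log (p + 2) * I + ‖φ t₁‖ ^ 2)
  have hK : (‖φ s‖ ^ 2) ^ 2 ≤ K * ‖φ s‖ ^ 2 := by
    calc (‖φ s‖ ^ 2) ^ 2
        ≤ 4 * cosh 2 ^ 2 * (log (p + 2) * (‖φ s‖ ^ 2 * I) + ‖φ t₁‖ ^ 2 * ‖φ s‖ ^ 2) := by
          refine hcore.trans ?_
          gcongr
          exact hinner _ _
      _ = K * ‖φ s‖ ^ 2 := by ring
  rcases (sq_nonneg ‖φ s‖).eq_or_lt with h0 | hpos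
  · rw [← h0]; positivity
  · exact le_of_mul_le_mul_right (by nlinarith) hpos

end VectorPolynomial

theorem dg_inverse_estimate_general (H : Type*) [NormedAddCommGroup H] [InnerProductSpace ℝ H] :
    ∃ C : ℝ, 0 < C ∧ ∀ (p : ℕ) (t₀ t₁ : ℝ), t₀ < t₁ →
      ∀ φ φ' : ℝ → H,
        (∃ c : ℕ → H, ∀ s, φ s = ∑ i ∈ Finset.range (p + 1), s ^ i • c i) →
        (∀ s : ℝ, HasDerivAt φ (φ' s) s) →
        ⨆ s ∈ Ioc t₀ t₁, ‖φ s‖ ^ 2 ≤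
          C * (Real.log (p + 2) * (∫ s in Ioc t₀ t₁, ‖φ' s‖ ^ 2 * (s - t₀)) +
            ‖φ t₁‖ ^ 2) := by
  refine ⟨4 * cosh 2 ^ 2, by positivity, fun p t₀ t₁ ht φ φ' hφ hφ' => ?_⟩
  have hbound := fun s (hs : s ∈ Ioc t₀ t₁) => norm_sq_le_log_mul_integral_add_norm_sq hφ hφ' hs
  have hnonneg := (sq_nonneg _).trans (hbound t₁ (right_mem_Ioc.2 ht))
  exact Real.iSup_le (fun s => Real.iSup_le (hbound s) hnonneg) hnonneg

/-- Polynomial inverse-type estimate (Schötzau–Schwab): there is a constant `C`,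
independent of the time step and of the polynomial degree, such that for every
`L²(Ω)`-valued polynomial `φ` of degree ≤ p on the interval `J = (t₀, t₁]`,
`sup_{t ∈ J} ‖φ(t)‖² ≤ C (log(p+2) ∫_J ‖φ′(t)‖² (t − t₀) dt + ‖φ(t₁)‖²)`. -/
theorem dg_inverse_estimate (H : Type*) [NormedAddCommGroup H] [InnerProductSpace ℝ H]
    [CompleteSpace H] :
    ∃ C : ℝ, 0 < C ∧ ∀ (p : ℕ) (t₀ t₁ : ℝ), t₀ < t₁ →
      ∀ φ φ' : ℝ → H,
        (∃ c : ℕ → H, ∀ s, φ s = ∑ i ∈ Finset.range (p + 1), s ^ i • c i) →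
        (∀ s : ℝ, HasDerivAt φ (φ' s) s) →
        ⨆ s ∈ Ioc t₀ t₁, ‖φ s‖ ^ 2 ≤
          C * (Real.log (p + 2) * (∫ s in Ioc t₀ t₁, ‖φ' s‖ ^ 2 * (s - t₀)) +
            ‖φ t₁‖ ^ 2) :=
  dg_inverse_estimate_general H
end
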